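/- Let k be a field and equip k^{2n} with the hyperbolic quadratic form. For any three maximal isotropic subspaces Z_1, Z_2, Z_3 of k^{2n}, one has dim(Z_1 ∩ Z_2) + dim(Z_2 ∩ Z_3) + dim(Z_3 ∩ Z_1) ≡ n (mod 2). -/

import Mathlib

/-- The hyperbolic quadratic form `Q(x,y) = Σ xᵢ yᵢ` on `k^n × k^n ≅ k^{2n}`. -/
def hypQ {k : Type*} [CommRing k] {n : ℕ} (v : (Fin n → k) × (Fin n → k)) : k :=
  ∑ i, v.1 i * v.2 i

/-!
Let `L₁, L₂, L₃` be Lagrangians (totally isotropic, of half dimension `n`) of a quadratic space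
with nondegenerate polar form `B`. The pairs `(a, b) ∈ L₁ × L₂` with `a + b ∈ L₃` carry the bilinear
form `((a, b), (a', b')) ↦ B a b'`, a quadratic analogue of Kashiwara's Maslov form. It is
alternating, since `B a b = Q (a + b) - Q a - Q b = 0`, so its radical has the dimension of the
whole space modulo 2. The space has dimension `n + dim (L₁ ∩ L₂ ∩ L₃)`; since each Lagrangian is its
own orthogonal, the radical consists of the pairs with `a ∈ L₁ ∩ L₂ + L₁ ∩ L₃`, and has dimension
`dim (L₁ ∩ L₂) + dim (L₁ ∩ L₃) + dim (L₂ ∩ L₃) - dim (L₁ ∩ L₂ ∩ L₃)`. Being alternating rather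
than merely skew is what makes the argument work in characteristic 2 as well.
-/

open Module Submodule

namespace LinearMap.BilinForm

variable {k V : Type*} [Field k] [AddCommGroup V] [Module k V]

lemma orthogonal_sup (B : LinearMap.BilinForm k V) (A C : Submodule k V) :
    B.orthogonal (A ⊔ C) = B.orthogonal A ⊓ B.orthogonal C := by
  refine le_antisymm (le_inf (orthogonal_le le_sup_left) (orthogonal_le le_sup_right)) ?_
  rintro x ⟨hA, hC⟩
  have : A ⊔ C ≤ LinearMap.ker (B.flip x) := sup_le (fun a ha => hA a ha) (fun c hc => hC c hc)
  exact fun y hy => this hy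

lemma orthogonal_inf [FiniteDimensional k V] {B : LinearMap.BilinForm k V} (hB : B.Nondegenerate)
    (hB₀ : B.IsRefl) (A C : Submodule k V) :
    B.orthogonal (A ⊓ C) = B.orthogonal A ⊔ B.orthogonal C := by
  conv_lhs => rw [← orthogonal_orthogonal hB hB₀ A, ← orthogonal_orthogonal hB hB₀ C,
    ← orthogonal_sup, orthogonal_orthogonal hB hB₀]

lemma IsAlt.eq_zero_of_isOrtho_pair {B : LinearMap.BilinForm k V} (hB : B.IsAlt) {u v : V}
    (huv : B u v ≠ 0) {a b : k} (hu : B u (a • u + b • v) = 0) (hv : B v (a • u + b • v) = 0) :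
    a = 0 ∧ b = 0 := by
  simp only [map_add, map_smul, smul_eq_mul, hB.self_eq_zero, mul_zero, zero_add, add_zero,
    ← hB.neg_eq u v, mul_neg, neg_eq_zero, mul_eq_zero] at hu hv
  exact ⟨hv.resolve_right huv, hu.resolve_right huv⟩

lemma IsAlt.isCompl_orthogonal_span_pair {B : LinearMap.BilinForm k V} [FiniteDimensional k V]
    (hB : B.IsAlt) {u v : V} (huv : B u v ≠ 0) :
    IsCompl (span k (Set.range ![u, v])) (B.orthogonal (span k (Set.range ![u, v]))) := by
  refine (isCompl_orthogonal_iff_disjoint hB.isRefl).2 (disjoint_def.2 fun x hxW hxW' => ?_)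
  obtain ⟨c, rfl⟩ := (mem_span_range_iff_exists_fun k).1 hxW
  rw [Fin.sum_univ_two] at hxW' ⊢
  obtain ⟨h0, h1⟩ := hB.eq_zero_of_isOrtho_pair huv (hxW' u (subset_span ⟨0, rfl⟩))
    (hxW' v (subset_span ⟨1, rfl⟩))
  simp [h0, h1]

lemma IsAlt.finrank_span_pair {B : LinearMap.BilinForm k V} (hB : B.IsAlt) {u v : V}
    (huv : B u v ≠ 0) :
    finrank k (span k (Set.range ![u, v])) = 2 := by
  refine (finrank_span_eq_card (LinearIndependent.pair_iff.2 fun a b hab => ?_)).trans (by simp)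
  exact hB.eq_zero_of_isOrtho_pair huv (by rw [hab, map_zero]) (by rw [hab, map_zero])

theorem IsAlt.finrank_ker_modEq [FiniteDimensional k V] {B : LinearMap.BilinForm k V}
    (hB : B.IsAlt) :
    finrank k (LinearMap.ker B) ≡ finrank k V [MOD 2] := by
  induction hm : finrank k V using Nat.strong_induction_on generalizing V with
  | _ m ih =>
  by_cases h0 : B = 0
  · rw [h0, LinearMap.ker_zero, finrank_top, hm]
  obtain ⟨u, v, huv⟩ : ∃ u v, B u v ≠ 0 := by
    by_contra! hc
    exact h0 (LinearMap.ext₂ hc)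
  set W := span k (Set.range ![u, v])
  set W' := B.orthogonal W
  have hcompl : IsCompl W W' := hB.isCompl_orthogonal_span_pair huv
  have hdim : finrank k W + finrank k W' = m := hm ▸ finrank_add_eq_of_isCompl hcompl
  have hW : finrank k W = 2 := hB.finrank_span_pair huv
  have hker_le : LinearMap.ker B ≤ W' := fun x hx w _ => hB.isRefl x w (by simp_all)
  have hker : finrank k (LinearMap.ker (B.restrict W')) = finrank k (LinearMap.ker B) := by
    rw [ker_restrict_eq_of_codisjoint hcompl.symm.codisjoint
      fun x hx y hy => hB.isRefl y x (hx y hy)]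
    exact (comapSubtypeEquivOfLe hker_le).finrank_eq
  have hW' : finrank k (LinearMap.ker (B.restrict W')) ≡ finrank k W' [MOD 2] :=
    ih _ (by omega) (fun x => hB x) rfl
  rw [hker] at hW'
  unfold Nat.ModEq at *
  omega

end LinearMap.BilinForm

namespace Submodule

variable {k V : Type*} [Field k] [AddCommGroup V] [Module k V]

lemma finrank_map_add_finrank_inf_ker {W : Type*} [AddCommGroup W] [Module k W]
    [FiniteDimensional k V] (f : V →ₗ[k] W) (S : Submodule k V) :
    finrank k (S.map f) + finrank k ↥(S ⊓ LinearMap.ker f) = finrank k S := by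
  rw [← LinearMap.range_domRestrict, ← (f.domRestrict S).finrank_range_add_finrank_ker,
    LinearMap.ker_domRestrict, ← finrank_map_subtype_eq, map_comap_subtype]

def pairsWithSumIn (A M N : Submodule k V) : Submodule k (V × V) :=
  A.prod M ⊓ N.comap (LinearMap.fst k V V + LinearMap.snd k V V)

variable {A M N : Submodule k V}

@[simp]
lemma mem_pairsWithSumIn {x : V × V} :
    x ∈ pairsWithSumIn A M N ↔ x.1 ∈ A ∧ x.2 ∈ M ∧ x.1 + x.2 ∈ N := by
  simp [pairsWithSumIn, and_assoc]

lemma map_fst_pairsWithSumIn :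
    (pairsWithSumIn A M N).map (LinearMap.fst k V V) = A ⊓ (M ⊔ N) := by
  ext a
  simp only [mem_map, mem_pairsWithSumIn, LinearMap.fst_apply, Prod.exists, exists_and_right,
    exists_eq_right, mem_inf, mem_sup]
  constructor
  · rintro ⟨b, ha, hb, hab⟩
    exact ⟨ha, -b, neg_mem hb, a + b, hab, by abel⟩
  · rintro ⟨ha, m, hm, c, hc, rfl⟩
    exact ⟨-m, ha, neg_mem hm, by simpa using hc⟩

lemma pairsWithSumIn_inf_ker_fst :
    pairsWithSumIn A M N ⊓ LinearMap.ker (LinearMap.fst k V V) =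
      (M ⊓ N).map (LinearMap.inr k V V) := by
  ext ⟨a, b⟩
  simp only [mem_inf, mem_pairsWithSumIn, LinearMap.mem_ker, LinearMap.fst_apply, mem_map,
    LinearMap.inr_apply, Prod.mk.injEq]
  constructor
  · rintro ⟨⟨-, hb, hab⟩, rfl⟩
    exact ⟨b, ⟨hb, by simpa using hab⟩, rfl, rfl⟩
  · rintro ⟨b, ⟨hb, hb'⟩, rfl, rfl⟩
    exact ⟨⟨zero_mem _, hb, by simpa using hb'⟩, rfl⟩

lemma finrank_pairsWithSumIn [FiniteDimensional k V] :
    finrank k (pairsWithSumIn A M N) = finrank k ↥(A ⊓ (M ⊔ N)) + finrank k ↥(M ⊓ N) := by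
  rw [← finrank_map_add_finrank_inf_ker (LinearMap.fst k V V), map_fst_pairsWithSumIn,
    pairsWithSumIn_inf_ker_fst,
    ← (equivMapOfInjective _ LinearMap.inr_injective _).finrank_eq]

end Submodule

namespace QuadraticForm

variable {k V : Type*} [Field k] [AddCommGroup V] [Module k V]

def IsLagrangian (Q : QuadraticForm k V) (L : Submodule k V) : Prop :=
  (∀ v ∈ L, Q v = 0) ∧ 2 * finrank k L = finrank k V

lemma isRefl_polarBilin (Q : QuadraticForm k V) :
    LinearMap.BilinForm.IsRefl Q.polarBilin := fun x y h => by
  rwa [QuadraticMap.polarBilin_apply_apply, QuadraticMap.polar_comm] at h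

lemma polarBilin_eq_zero_of_mem {Q : QuadraticForm k V} {L : Submodule k V}
    (hL : ∀ v ∈ L, Q v = 0) {x y : V} (hx : x ∈ L) (hy : y ∈ L) : Q.polarBilin x y = 0 := by
  rw [QuadraticMap.polarBilin_apply_apply, QuadraticMap.polar, hL _ (L.add_mem hx hy), hL x hx,
    hL y hy, sub_zero, sub_zero]

lemma IsLagrangian.orthogonal_eq [FiniteDimensional k V] {Q : QuadraticForm k V}
    (hQ : Q.polarBilin.Nondegenerate) {L : Submodule k V} (hL : Q.IsLagrangian L) :
    LinearMap.BilinForm.orthogonal Q.polarBilin L = L := by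
  have hle : L ≤ LinearMap.BilinForm.orthogonal Q.polarBilin L := fun x hx y hy =>
    polarBilin_eq_zero_of_mem hL.1 hy hx
  refine (eq_of_le_of_finrank_le hle ?_).symm
  rw [LinearMap.BilinForm.finrank_orthogonal hQ]
  have := hL.2
  omega

def kashiwaraForm (Q : QuadraticForm k V) (L₁ L₂ L₃ : Submodule k V) :
    LinearMap.BilinForm k (pairsWithSumIn L₁ L₂ L₃) :=
  Q.polarBilin.compl₁₂ (LinearMap.fst k V V ∘ₗ (pairsWithSumIn L₁ L₂ L₃).subtype)
    (LinearMap.snd k V V ∘ₗ (pairsWithSumIn L₁ L₂ L₃).subtype)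

variable {Q : QuadraticForm k V} {L₁ L₂ L₃ : Submodule k V}

lemma kashiwaraForm_apply (x y : pairsWithSumIn L₁ L₂ L₃) :
    Q.kashiwaraForm L₁ L₂ L₃ x y = Q.polarBilin (x : V × V).1 (y : V × V).2 := rfl

lemma isAlt_kashiwaraForm (h₁ : ∀ v ∈ L₁, Q v = 0) (h₂ : ∀ v ∈ L₂, Q v = 0)
    (h₃ : ∀ v ∈ L₃, Q v = 0) : (Q.kashiwaraForm L₁ L₂ L₃).IsAlt := by
  rintro ⟨⟨a, b⟩, hx⟩
  obtain ⟨ha, hb, hab⟩ := mem_pairsWithSumIn.1 hx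
  rw [kashiwaraForm_apply, QuadraticMap.polarBilin_apply_apply, QuadraticMap.polar, h₃ _ hab,
    h₁ a ha, h₂ b hb, sub_zero, sub_zero]

lemma mem_ker_kashiwaraForm {x : pairsWithSumIn L₁ L₂ L₃} :
    x ∈ LinearMap.ker (Q.kashiwaraForm L₁ L₂ L₃) ↔
      ∀ y ∈ pairsWithSumIn L₁ L₂ L₃, Q.polarBilin (x : V × V).1 y.2 = 0 := by
  simp only [LinearMap.mem_ker, LinearMap.ext_iff, Subtype.forall, kashiwaraForm_apply,
    LinearMap.zero_apply]

lemma map_subtype_ker_kashiwaraForm [FiniteDimensional k V] (hQ : Q.polarBilin.Nondegenerate)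
    (h₁ : Q.IsLagrangian L₁) (h₂ : Q.IsLagrangian L₂) (h₃ : Q.IsLagrangian L₃) :
    (LinearMap.ker (Q.kashiwaraForm L₁ L₂ L₃)).map (pairsWithSumIn L₁ L₂ L₃).subtype =
      pairsWithSumIn (L₁ ⊓ L₂ ⊔ L₁ ⊓ L₃) L₂ L₃ := by
  apply le_antisymm
  · rintro _ ⟨⟨⟨a, b⟩, hx⟩, hker, rfl⟩
    obtain ⟨ha, hb, hab⟩ := mem_pairsWithSumIn.1 hx
    refine mem_pairsWithSumIn.2 ⟨?_, hb, hab⟩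
    have hperp : a ∈ LinearMap.BilinForm.orthogonal Q.polarBilin (L₂ ⊓ (L₁ ⊔ L₃)) := by
      rintro _ ⟨hy, hy'⟩
      obtain ⟨p, hp, c, hc, rfl⟩ := mem_sup.1 hy'
      have hpair : (-p, p + c) ∈ pairsWithSumIn L₁ L₂ L₃ :=
        mem_pairsWithSumIn.2 ⟨neg_mem hp, hy, by simpa⟩
      exact isRefl_polarBilin Q _ _ (mem_ker_kashiwaraForm.1 hker _ hpair)
    rw [LinearMap.BilinForm.orthogonal_inf hQ (isRefl_polarBilin Q),
      LinearMap.BilinForm.orthogonal_sup, h₁.orthogonal_eq hQ, h₂.orthogonal_eq hQ,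
      h₃.orthogonal_eq hQ] at hperp
    have hmodular : L₁ ⊓ (L₂ ⊔ L₁ ⊓ L₃) = L₁ ⊓ L₂ ⊔ L₁ ⊓ L₃ := by
      rw [inf_comm, sup_comm, sup_inf_assoc_of_le _ inf_le_left, sup_comm, inf_comm L₂]
    exact hmodular ▸ mem_inf.2 ⟨ha, hperp⟩
  · rintro ⟨a, b⟩ hx
    obtain ⟨ha, hb, hab⟩ := mem_pairsWithSumIn.1 hx
    have hle : L₁ ⊓ L₂ ⊔ L₁ ⊓ L₃ ≤ L₁ := sup_le inf_le_left inf_le_left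
    refine ⟨⟨(a, b), mem_pairsWithSumIn.2 ⟨hle ha, hb, hab⟩⟩, mem_ker_kashiwaraForm.2 ?_, rfl⟩
    rintro ⟨a', b'⟩ hy
    obtain ⟨ha', hb', hab'⟩ := mem_pairsWithSumIn.1 hy
    obtain ⟨p, hp, q, hq, rfl⟩ := mem_sup.1 ha
    have hpb : Q.polarBilin p b' = 0 := polarBilin_eq_zero_of_mem h₂.1 (mem_inf.1 hp).2 hb'
    have hqa : Q.polarBilin q a' = 0 := polarBilin_eq_zero_of_mem h₁.1 (mem_inf.1 hq).1 ha'
    have hqab : Q.polarBilin q (a' + b') = 0 :=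
      polarBilin_eq_zero_of_mem h₃.1 (mem_inf.1 hq).2 hab'
    simp only [map_add, LinearMap.add_apply] at hqab ⊢
    rw [hpb, zero_add]
    rwa [hqa, zero_add] at hqab

theorem IsLagrangian.finrank_inf_add_finrank_inf_add_finrank_inf_modEq [FiniteDimensional k V]
    (hQ : Q.polarBilin.Nondegenerate) (h₁ : Q.IsLagrangian L₁) (h₂ : Q.IsLagrangian L₂)
    (h₃ : Q.IsLagrangian L₃) :
    finrank k ↥(L₁ ⊓ L₂) + finrank k ↥(L₂ ⊓ L₃) + finrank k ↥(L₃ ⊓ L₁) ≡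
      finrank k L₁ [MOD 2] := by
  have hparity := (isAlt_kashiwaraForm h₁.1 h₂.1 h₃.1).finrank_ker_modEq
  have hK := finrank_pairsWithSumIn (A := L₁) (M := L₂) (N := L₃)
  have hR : finrank k (LinearMap.ker (Q.kashiwaraForm L₁ L₂ L₃)) =
      finrank k ↥(L₁ ⊓ L₂ ⊔ L₁ ⊓ L₃) + finrank k ↥(L₂ ⊓ L₃) := by
    rw [← finrank_map_subtype_eq, map_subtype_ker_kashiwaraForm hQ h₁ h₂ h₃,
      finrank_pairsWithSumIn, inf_eq_left.2 (sup_le_sup inf_le_right inf_le_right)]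
  have hsup : finrank k ↥(L₁ ⊔ (L₂ ⊔ L₃)) + finrank k ↥(L₁ ⊓ (L₂ ⊓ L₃)) = finrank k V := by
    have horth : LinearMap.BilinForm.orthogonal Q.polarBilin (L₁ ⊔ (L₂ ⊔ L₃)) =
        L₁ ⊓ (L₂ ⊓ L₃) := by
      simp only [LinearMap.BilinForm.orthogonal_sup, h₁.orthogonal_eq hQ, h₂.orthogonal_eq hQ,
        h₃.orthogonal_eq hQ]
    rw [← horth, LinearMap.BilinForm.finrank_orthogonal hQ]
    have := finrank_le (L₁ ⊔ (L₂ ⊔ L₃))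
    omega
  have e₁ := finrank_sup_add_finrank_inf_eq L₁ (L₂ ⊔ L₃)
  have e₂ := finrank_sup_add_finrank_inf_eq L₂ L₃
  have e₃ := finrank_sup_add_finrank_inf_eq (L₁ ⊓ L₂) (L₁ ⊓ L₃)
  rw [← inf_inf_distrib_left] at e₃
  rw [inf_comm L₃ L₁]
  have d₁ := h₁.2
  have d₂ := h₂.2
  have d₃ := h₃.2
  unfold Nat.ModEq at *
  omega

section Hyperbolic

variable (k) (n : ℕ)

def hyperbolic : QuadraticForm k ((Fin n → k) × (Fin n → k)) :=
  LinearMap.BilinMap.toQuadraticMap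
    ((dotProductBilin k k).compl₁₂ (LinearMap.fst k _ _) (LinearMap.snd k _ _))

variable {k n}

lemma hyperbolic_apply (v : (Fin n → k) × (Fin n → k)) : hyperbolic k n v = hypQ v := rfl

lemma nondegenerate_polarBilin_hyperbolic : (hyperbolic k n).polarBilin.Nondegenerate := by
  refine (LinearMap.IsRefl.nondegenerate_iff_separatingLeft fun x y h => ?_).2 fun v hv => ?_
  · exact isRefl_polarBilin _ x y h
  ext i
  · simpa [hyperbolic, LinearMap.BilinMap.polarBilin_toQuadraticMap] using hv (0, Pi.single i 1)
  · simpa [hyperbolic, LinearMap.BilinMap.polarBilin_toQuadraticMap] using hv (Pi.single i 1, 0)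

end Hyperbolic

end QuadraticForm

/-- For any three maximal isotropic subspaces `Z₁, Z₂, Z₃` of `k^{2n}` with its hyperbolic
quadratic form, `dim(Z₁ ∩ Z₂) + dim(Z₂ ∩ Z₃) + dim(Z₃ ∩ Z₁) ≡ n (mod 2)`. -/
theorem stmt17 (k : Type*) [Field k] (n : ℕ)
    (Z₁ Z₂ Z₃ : Submodule k ((Fin n → k) × (Fin n → k)))
    (h₁ : Module.finrank k Z₁ = n ∧ ∀ v ∈ Z₁, hypQ v = 0)
    (h₂ : Module.finrank k Z₂ = n ∧ ∀ v ∈ Z₂, hypQ v = 0)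
    (h₃ : Module.finrank k Z₃ = n ∧ ∀ v ∈ Z₃, hypQ v = 0) :
    (Module.finrank k ↥(Z₁ ⊓ Z₂) + Module.finrank k ↥(Z₂ ⊓ Z₃) +
        Module.finrank k ↥(Z₃ ⊓ Z₁)) ≡ n [MOD 2] := by
  have isLagrangian (Z : Submodule k ((Fin n → k) × (Fin n → k)))
      (hZ : finrank k Z = n ∧ ∀ v ∈ Z, hypQ v = 0) :
      (QuadraticForm.hyperbolic k n).IsLagrangian Z :=
    ⟨fun v hv => (QuadraticForm.hyperbolic_apply v).trans (hZ.2 v hv), by simp [hZ.1, two_mul]⟩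
  simpa only [h₁.1] using (isLagrangian Z₁ h₁).finrank_inf_add_finrank_inf_add_finrank_inf_modEq
    QuadraticForm.nondegenerate_polarBilin_hyperbolic (isLagrangian Z₂ h₂) (isLagrangian Z₃ h₃)
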